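/- arXiv:2301.12884 — 8 statements merged into one kernel-verified Lean document; each statement's English description precedes it below -/
import Mathlib

section
/- If 0 < m < u ≤ 1, then m/(u+m) < (1-m)/((1-m)+(1-u)), so the interval of probabilities p for which recourse is strictly optimal is nonempty. -/
/-- If `0 < m < u ≤ 1` then `m/(u+m) < (1-m)/((1-m)+(1-u))`, so the interval of
probabilities for which recourse is strictly optimal is nonempty. -/
theorem recourse_interval_nonempty (u m : ℝ) (hm : 0 < m) (hmu : m < u) (hu : u ≤ 1) :
    m / (u + m) < (1 - m) / ((1 - m) + (1 - u)) ∧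
      ∃ p : ℝ, m / (u + m) < p ∧ p < (1 - m) / ((1 - m) + (1 - u)) := by
  have thresholds_lt : m / (u + m) < (1 - m) / ((1 - m) + (1 - u)) := by
    rw [div_lt_div_iff₀ (by linarith) (by linarith)]
    -- the cross-multiplied difference `(1 - m) * (u + m) - m * ((1 - m) + (1 - u))` is `u - m`
    linear_combination hmu
  exact ⟨thresholds_lt, exists_between thresholds_lt⟩
end

section
/- If 0 < u ≤ m < 1, then m/(u+m) ≥ (1-m)/((1-m)+(1-u)), so there is no probability p with m/(u+m) < p < (1-m)/((1-m)+(1-u)): the decision-maker never strictly prefers recourse to both accept and reject. -/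
theorem div_add_le_div_add_iff {𝕜 : Type*} [Field 𝕜] [LinearOrder 𝕜] [IsStrictOrderedRing 𝕜]
    {a b c d : 𝕜} (hab : 0 < a + b) (hcd : 0 < c + d) :
    c / (c + d) ≤ a / (a + b) ↔ c * b ≤ a * d := by
  rw [div_le_div_iff₀ hcd hab]
  constructor <;> intro h <;> linarith

/-- If `0 < u ≤ m < 1` then `m/(u+m) ≥ (1-m)/((1-m)+(1-u))`, so no probability `p`
lies strictly between the two thresholds: recourse is never strictly optimal. -/
theorem recourse_interval_empty (u m : ℝ) (hu : 0 < u) (hum : u ≤ m) (hm : m < 1) :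
    m / (u + m) ≥ (1 - m) / ((1 - m) + (1 - u)) ∧
      ¬ ∃ p : ℝ, m / (u + m) < p ∧ p < (1 - m) / ((1 - m) + (1 - u)) := by
  have thresholds_le : (1 - m) / ((1 - m) + (1 - u)) ≤ m / (u + m) := by
    rw [add_comm u m, div_add_le_div_add_iff (by linarith) (by linarith)]
    -- `(1 - m) * u ≤ m * (1 - u)`: the `m * u` terms cancel, leaving `u ≤ m`.
    linarith
  exact ⟨thresholds_le, fun ⟨_, h_reject, h_accept⟩ =>
    (h_reject.trans h_accept).not_ge thresholds_le⟩
end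

section
/- For fixed u ∈ (0,1), the length of the recourse interval, (1-m)/((1-m)+(1-u)) - m/(u+m), is strictly decreasing in m on (0, u). -/
theorem strictMonoOn_div_add_const {c : ℝ} (hc : 0 < c) :
    StrictMonoOn (fun x : ℝ => x / (x + c)) (Set.Ioi (-c)) := by
  intro x hx y hy hxy
  have hx' : 0 < x + c := by linarith [Set.mem_Ioi.mp hx]
  have hy' : 0 < y + c := by linarith [Set.mem_Ioi.mp hy]
  rw [div_lt_div_iff₀ hx' hy']
  nlinarith

/-- For fixed `u ∈ (0,1)`, the length of the recourse interval
`(1-m)/((1-m)+(1-u)) - m/(u+m)` is strictly decreasing in `m` on `(0, u)`. -/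
theorem recourse_length_strictAntiOn_m (u : ℝ) (hu0 : 0 < u) (hu1 : u < 1) :
    StrictAntiOn (fun m : ℝ => (1 - m) / ((1 - m) + (1 - u)) - m / (u + m))
      (Set.Ioo 0 u) := by
  rintro a ⟨ha0, hau⟩ b ⟨hb0, hbu⟩ hab
  have upper_endpoint_decreasing :
      (1 - b) / ((1 - b) + (1 - u)) < (1 - a) / ((1 - a) + (1 - u)) :=
    strictMonoOn_div_add_const (sub_pos.mpr hu1)
      (Set.mem_Ioi.mpr (by linarith)) (Set.mem_Ioi.mpr (by linarith)) (by linarith)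
  have lower_endpoint_increasing : a / (u + a) < b / (u + b) := by
    rw [add_comm u a, add_comm u b]
    exact strictMonoOn_div_add_const hu0
      (Set.mem_Ioi.mpr (by linarith)) (Set.mem_Ioi.mpr (by linarith)) hab
  simp only
  linarith
end

section
/- The length of the interval (1/2, (1-m)/((1-m)+(1-u))) of applicants who lose acceptance to recourse equals (u-m)/(2((1-m)+(1-u))), and this is strictly increasing in u and strictly decreasing in m for 0 < m < u < 1. -/
/-!
Writing `a = 1 - m` and `b = 1 - u`, the upper endpoint is `a / (a + b)` and `u - m = a - b`, so the
length is `a / (a + b) - 1 / 2`. For positive `a` and `b` this ratio falls as `b` grows and rises as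
`a` grows, i.e. it rises with `u` and falls with `m`.
-/

open Set

lemma div_add_sub_half {a b : ℝ} (h : a + b ≠ 0) :
    a / (a + b) - 1 / 2 = (a - b) / (2 * (a + b)) := by
  field_simp
  ring

lemma strictAntiOn_div_add {a : ℝ} (ha : 0 < a) :
    StrictAntiOn (fun b => a / (a + b)) (Ioi (-a)) := by
  intro b₁ hb₁ b₂ _ hb
  rw [mem_Ioi] at hb₁
  exact div_lt_div_of_pos_left ha (by linarith) (by linarith)

lemma strictMonoOn_div_add {b : ℝ} (hb : 0 < b) :
    StrictMonoOn (fun a => a / (a + b)) (Ioi (-b)) := by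
  intro a₁ ha₁ a₂ ha₂ ha
  rw [mem_Ioi] at ha₁ ha₂
  rw [div_lt_div_iff₀ (by linarith) (by linarith)]
  nlinarith

lemma recourse_length_eq {u m : ℝ} (h : (1 - m) + (1 - u) ≠ 0) :
    (1 - m) / ((1 - m) + (1 - u)) - 1 / 2 = (u - m) / (2 * ((1 - m) + (1 - u))) := by
  rw [div_add_sub_half h, sub_sub_sub_cancel_left]

/-- The length of the interval `(1/2, (1-m)/((1-m)+(1-u)))` of applicants who lose
acceptance to recourse equals `(u-m)/(2((1-m)+(1-u)))`; it is strictly increasing in `u`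
and strictly decreasing in `m` for `0 < m < u < 1`. -/
theorem accept_to_recourse_length :
    (∀ u m : ℝ, 0 < m → m < u → u < 1 →
      (1 - m) / ((1 - m) + (1 - u)) - 1 / 2 = (u - m) / (2 * ((1 - m) + (1 - u)))) ∧
    (∀ m : ℝ, ∀ u₁ u₂ : ℝ, 0 < m → m < u₁ → u₁ < u₂ → u₂ < 1 →
      (u₁ - m) / (2 * ((1 - m) + (1 - u₁))) < (u₂ - m) / (2 * ((1 - m) + (1 - u₂)))) ∧
    (∀ u : ℝ, ∀ m₁ m₂ : ℝ, 0 < m₁ → m₁ < m₂ → m₂ < u → u < 1 →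
      (u - m₂) / (2 * ((1 - m₂) + (1 - u))) < (u - m₁) / (2 * ((1 - m₁) + (1 - u)))) := by
  refine ⟨fun u m _ hmu hu => recourse_length_eq (by linarith), ?_, ?_⟩
  · intro m u₁ u₂ _ hmu₁ hu₁₂ hu₂
    rw [← recourse_length_eq (by linarith), ← recourse_length_eq (by linarith)]
    refine sub_lt_sub_right (strictAntiOn_div_add (by linarith) ?_ ?_ (by linarith)) _ <;>
      rw [mem_Ioi] <;> linarith
  · intro u m₁ m₂ _ hm₁₂ hm₂u hu
    rw [← recourse_length_eq (by linarith), ← recourse_length_eq (by linarith)]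
    refine sub_lt_sub_right (strictMonoOn_div_add (by linarith) ?_ ?_ (by linarith)) _ <;>
      rw [mem_Ioi] <;> linarith
end

section
/- In the two-decision-maker game with u, m ∈ (0,1), if p < m/(u+m) (so p·u - (1-p)·m < 0) and p < 1/2, then (Reject, Reject) is the unique Nash equilibrium (in pure strategies) of the game. -/
/-- An action in the two-decision-maker game. -/
inductive RAction where
  | accept
  | recourse
  | reject
  deriving DecidableEq

/-- The applicant's preference rank over actions: Accept ≻ Recourse ≻ Reject. -/
def RAction.rank : RAction → ℕ
  | .accept => 2
  | .recourse => 1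
  | .reject => 0

/-- Solo payoff from serving the applicant with a given action. -/
noncomputable def soloPayoff (p u m : ℝ) : RAction → ℝ
  | .accept => p - (1 - p)
  | .recourse => p * u - (1 - p) * m
  | .reject => 0

/-- A player's payoff when she plays `a` and the opponent plays `b`: the applicant goes
to the player whose action he prefers (full solo payoff, the other gets 0); identical
actions split the solo payoff equally. -/
noncomputable def payoff (p u m : ℝ) (a b : RAction) : ℝ :=
  if a.rank > b.rank then soloPayoff p u m a
  else if a.rank = b.rank then soloPayoff p u m a / 2
  else 0

/-- `(a, b)` is a pure-strategy Nash equilibrium: neither player can strictly improve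
by unilateral deviation. -/
noncomputable def IsNash (p u m : ℝ) (a b : RAction) : Prop :=
  (∀ a' : RAction, payoff p u m a' b ≤ payoff p u m a b) ∧
  (∀ b' : RAction, payoff p u m b' a ≤ payoff p u m b a)
/- Rejecting always earns 0. When every other action has a negative solo payoff, a player who
weakly outranks her opponent earns a negative payoff, so she would rather reject; in a
profile of two non-reject actions one of them weakly outranks the other, and against a
rejecting opponent any other action is such a loss. -/

namespace RAction

theorem rank_eq_zero_iff {a : RAction} : a.rank = 0 ↔ a = reject := by
  cases a <;> simp [rank]

end RAction

section

variable {p u m : ℝ}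

theorem payoff_reject_left (b : RAction) : payoff p u m .reject b = 0 := by
  cases b <;> simp [payoff, soloPayoff, RAction.rank]

theorem payoff_nonpos (hsolo : ∀ a, soloPayoff p u m a ≤ 0) (a b : RAction) :
    payoff p u m a b ≤ 0 := by
  unfold payoff
  have := hsolo a
  split_ifs <;> linarith

theorem payoff_neg_of_rank_le {a b : RAction} (ha : soloPayoff p u m a < 0)
    (hba : b.rank ≤ a.rank) : payoff p u m a b < 0 := by
  unfold payoff
  split_ifs <;> first | linarith | omega

theorem IsNash.symm {a b : RAction} (h : IsNash p u m a b) : IsNash p u m b a :=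
  And.symm h

theorem IsNash.payoff_nonneg {a b : RAction} (h : IsNash p u m a b) :
    0 ≤ payoff p u m a b := by
  simpa only [payoff_reject_left] using h.1 .reject

theorem isNash_reject_reject (hsolo : ∀ a, soloPayoff p u m a ≤ 0) :
    IsNash p u m .reject .reject := by
  have hdev : ∀ a, payoff p u m a .reject ≤ payoff p u m .reject .reject := fun a => by
    rw [payoff_reject_left]
    exact payoff_nonpos hsolo a .reject
  exact ⟨hdev, hdev⟩

theorem IsNash.eq_reject_of_rank_le {a b : RAction}
    (hneg : ∀ a, a ≠ .reject → soloPayoff p u m a < 0) (h : IsNash p u m a b)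
    (hba : b.rank ≤ a.rank) : a = .reject ∧ b = .reject := by
  have ha : a = .reject := by
    by_contra ha
    exact (payoff_neg_of_rank_le (hneg a ha) hba).not_ge h.payoff_nonneg
  subst ha
  exact ⟨rfl, RAction.rank_eq_zero_iff.mp (Nat.le_zero.mp hba)⟩

theorem isNash_iff_reject_reject (hneg : ∀ a, a ≠ .reject → soloPayoff p u m a < 0)
    (a b : RAction) : IsNash p u m a b ↔ a = .reject ∧ b = .reject := by
  constructor
  · intro h
    rcases le_total b.rank a.rank with hba | hab
    · exact h.eq_reject_of_rank_le hneg hba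
    · exact (h.symm.eq_reject_of_rank_le hneg hab).symm
  · rintro ⟨rfl, rfl⟩
    refine isNash_reject_reject fun a => ?_
    by_cases ha : a = .reject
    · simp [ha, soloPayoff]
    · exact (hneg a ha).le

end

theorem soloPayoff_neg_of_ne_reject {p u m : ℝ} (hu0 : 0 < u) (hm0 : 0 < m)
    (hrec : p < m / (u + m)) (hp : p < 1 / 2) :
    ∀ a, a ≠ RAction.reject → soloPayoff p u m a < 0
  | .accept, _ => by simp only [soloPayoff]; linarith
  | .recourse, _ => by
    have := (lt_div_iff₀ (by linarith : 0 < u + m)).mp hrec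
    simp only [soloPayoff]
    linarith
  | .reject, h => absurd rfl h

theorem reject_reject_unique_nash_general (p u m : ℝ)
    (hu0 : 0 < u) (hm0 : 0 < m)
    (hrec : p < m / (u + m)) (hp : p < 1 / 2) :
    ∀ a b : RAction, IsNash p u m a b ↔ a = RAction.reject ∧ b = RAction.reject :=
  isNash_iff_reject_reject (soloPayoff_neg_of_ne_reject hu0 hm0 hrec hp)

/-- If `p < m/(u+m)` (so the recourse payoff is negative) and `p < 1/2`, then
`(Reject, Reject)` is the unique pure-strategy Nash equilibrium. -/
theorem reject_reject_unique_nash (p u m : ℝ) (hp0 : 0 ≤ p) (hp1 : p ≤ 1)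
    (hu0 : 0 < u) (hu1 : u < 1) (hm0 : 0 < m) (hm1 : m < 1)
    (hrec : p < m / (u + m)) (hp : p < 1 / 2) :
    ∀ a b : RAction, IsNash p u m a b ↔ a = RAction.reject ∧ b = RAction.reject :=
  reject_reject_unique_nash_general p u m hu0 hm0 hrec hp
end

section
/- In the two-decision-maker game, if m/(u+m) < p < 1/2 (so p·u - (1-p)·m > 0 and p - (1-p) < 0), then (Recourse, Recourse) is a Nash equilibrium in pure strategies. -/
namespace RAction

variable {p u m : ℝ}

theorem payoff_self (a : RAction) : payoff p u m a a = soloPayoff p u m a / 2 := by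
  simp [payoff]

theorem payoff_of_rank_gt {a b : RAction} (h : b.rank < a.rank) :
    payoff p u m a b = soloPayoff p u m a := by
  simp [payoff, h]

theorem payoff_of_rank_lt {a b : RAction} (h : a.rank < b.rank) : payoff p u m a b = 0 := by
  simp [payoff, h.not_gt, h.ne]

theorem isNash_self_iff {a : RAction} :
    IsNash p u m a a ↔ ∀ a', payoff p u m a' a ≤ payoff p u m a a :=
  ⟨And.left, fun h => ⟨h, h⟩⟩

theorem soloPayoff_accept_neg (hp : p < 1 / 2) : soloPayoff p u m accept < 0 := by
  simp only [soloPayoff]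
  linarith

theorem soloPayoff_recourse_pos (hum : 0 < u + m) (hrec : m / (u + m) < p) :
    0 < soloPayoff p u m recourse := by
  have h := (div_lt_iff₀ hum).mp hrec
  simp only [soloPayoff]
  linarith

end RAction

theorem recourse_recourse_nash_general (p u m : ℝ)
    (hu0 : 0 < u) (hm0 : 0 < m)
    (hrec : m / (u + m) < p) (hp : p < 1 / 2) :
    IsNash p u m RAction.recourse RAction.recourse := by
  have hrecourse : 0 < soloPayoff p u m .recourse :=
    RAction.soloPayoff_recourse_pos (by linarith) hrec
  have haccept : soloPayoff p u m .accept < 0 := RAction.soloPayoff_accept_neg hp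
  rw [RAction.isNash_self_iff, RAction.payoff_self]
  intro deviation
  cases deviation with
  | accept =>
    rw [RAction.payoff_of_rank_gt (by decide)]
    linarith
  | recourse => rw [RAction.payoff_self]
  | reject =>
    rw [RAction.payoff_of_rank_lt (by decide)]
    linarith

/-- If `m/(u+m) < p < 1/2`, then `(Recourse, Recourse)` is a pure-strategy Nash
equilibrium. -/
theorem recourse_recourse_nash (p u m : ℝ) (hp0 : 0 ≤ p) (hp1 : p ≤ 1)
    (hu0 : 0 < u) (hu1 : u < 1) (hm0 : 0 < m) (hm1 : m < 1)
    (hrec : m / (u + m) < p) (hp : p < 1 / 2) :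
    IsNash p u m RAction.recourse RAction.recourse :=
  recourse_recourse_nash_general p u m hu0 hm0 hrec hp
end

section
/- In the two-decision-maker game, if p > (1+(1-m))/(2+(1-m)+(1-u)) and p > 1/2, then Accept strictly dominates Recourse (given Reject is eliminated) and (Accept, Accept) is the unique pure Nash equilibrium obtained by iterated elimination of dominated strategies. -/
/-!
With `A = 2p - 1` and `R = p·u - (1-p)·m` the solo payoffs of Accept and Recourse, the two
hypotheses say exactly `0 < A` and `R < 2A` (the threshold on `p`, once the denominator is
cleared). Then a player whose action is not Accept and is ranked no higher than her opponent's
gains by switching to Accept: she now gets `A` or `A/2 > 0` instead of `0`, `R/2` or `0`.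
In every profile some player is ranked no higher than the other, so at an equilibrium she plays
Accept, and then the other, ranked at least as high, plays Accept as well.
-/

theorem RAction.eq_accept_of_rank_le {a : RAction} (h : RAction.accept.rank ≤ a.rank) :
    a = .accept := by
  cases a <;> simp_all [RAction.rank]

section Payoff

variable {p u m : ℝ}

theorem soloPayoff_accept_pos (hp : 1 / 2 < p) : 0 < soloPayoff p u m .accept := by
  simp only [soloPayoff]
  linarith

theorem soloPayoff_recourse_lt_two_mul_accept (hu1 : u < 1) (hm1 : m < 1)
    (hthr : (1 + (1 - m)) / (2 + (1 - m) + (1 - u)) < p) :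
    soloPayoff p u m .recourse < 2 * soloPayoff p u m .accept := by
  rw [div_lt_iff₀ (by linarith)] at hthr
  simp only [soloPayoff]
  linarith

theorem payoff_lt_payoff_accept (hA : 0 < soloPayoff p u m .accept)
    (hR : soloPayoff p u m .recourse < 2 * soloPayoff p u m .accept)
    {a b : RAction} (ha : a ≠ .accept) (hab : a.rank ≤ b.rank) :
    payoff p u m a b < payoff p u m .accept b := by
  cases a <;> cases b <;> simp_all [payoff, RAction.rank, soloPayoff]
  linarith

theorem payoff_le_payoff_accept_accept (hA : 0 ≤ soloPayoff p u m .accept) (a : RAction) :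
    payoff p u m a .accept ≤ payoff p u m .accept .accept := by
  cases a <;> simp [payoff, RAction.rank] <;> linarith

theorem isNash_accept_accept (hA : 0 ≤ soloPayoff p u m .accept) :
    IsNash p u m .accept .accept :=
  ⟨payoff_le_payoff_accept_accept hA, payoff_le_payoff_accept_accept hA⟩

theorem IsNash.eq_accept (hA : 0 < soloPayoff p u m .accept)
    (hR : soloPayoff p u m .recourse < 2 * soloPayoff p u m .accept)
    {a b : RAction} (h : IsNash p u m a b) : a = .accept ∧ b = .accept := by
  have accept_of_le {x y : RAction} (hxy : x.rank ≤ y.rank)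
      (hdev : payoff p u m .accept y ≤ payoff p u m x y) : x = .accept := by
    by_contra hx
    exact (payoff_lt_payoff_accept hA hR hx hxy).not_ge hdev
  rcases le_total a.rank b.rank with hab | hba
  · obtain rfl := accept_of_le hab (h.1 .accept)
    exact ⟨rfl, RAction.eq_accept_of_rank_le hab⟩
  · obtain rfl := accept_of_le hba (h.2 .accept)
    exact ⟨RAction.eq_accept_of_rank_le hba, rfl⟩

end Payoff

theorem accept_accept_unique_nash_general (p u m : ℝ)
    (hu1 : u < 1) (hm1 : m < 1)
    (hthr : (1 + (1 - m)) / (2 + (1 - m) + (1 - u)) < p) (hp : 1 / 2 < p) :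
    (∀ b : RAction, b ≠ RAction.reject →
      payoff p u m RAction.recourse b < payoff p u m RAction.accept b) ∧
    (∀ a b : RAction, IsNash p u m a b ↔ a = RAction.accept ∧ b = RAction.accept) := by
  have hA := soloPayoff_accept_pos (u := u) (m := m) hp
  have hR := soloPayoff_recourse_lt_two_mul_accept hu1 hm1 hthr
  refine ⟨fun b hb => payoff_lt_payoff_accept hA hR (by decide) ?_, fun a b => ⟨?_, ?_⟩⟩
  · cases b <;> simp_all [RAction.rank]
  · exact IsNash.eq_accept hA hR
  · rintro ⟨rfl, rfl⟩
    exact isNash_accept_accept hA.le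

/-- If `p > (1+(1-m))/(2+(1-m)+(1-u))` and `p > 1/2`, then Accept strictly dominates
Recourse once Reject is eliminated, and `(Accept, Accept)` is the unique pure-strategy
Nash equilibrium. -/
theorem accept_accept_unique_nash (p u m : ℝ) (hp0 : 0 ≤ p) (hp1 : p ≤ 1)
    (hu0 : 0 < u) (hu1 : u < 1) (hm0 : 0 < m) (hm1 : m < 1)
    (hthr : (1 + (1 - m)) / (2 + (1 - m) + (1 - u)) < p) (hp : 1 / 2 < p) :
    (∀ b : RAction, b ≠ RAction.reject →
      payoff p u m RAction.recourse b < payoff p u m RAction.accept b) ∧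
    (∀ a b : RAction, IsNash p u m a b ↔ a = RAction.accept ∧ b = RAction.accept) :=
  accept_accept_unique_nash_general p u m hu1 hm1 hthr hp
end

section
/- For all u, m ∈ [0,1) , (1+(1-m))/(2+(1-m)+(1-u)) ≤ (1-m)/((1-m)+(1-u)) if and only if (1-m)/((1-m)+(1-u)) ≥ 1/2, i.e., when u ≥ m; in particular when m ≤ u the competition acceptance threshold max{(1+(1-m))/(2+(1-m)+(1-u)), 1/2} is less than or equal to the no-competition acceptance threshold max{(1-m)/((1-m)+(1-u)), 1/2}. -/
/-! Writing `a = 1 - m` and `b = 1 - u`, both comparisons become `b ≤ a` after clearing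
the (positive) denominators: `(1 + a)(a + b) ≤ a(2 + a + b)` and `a + b ≤ 2a` each reduce
to it. -/

lemma half_le_div_add_iff {a b : ℝ} (hab : 0 < a + b) : 1 / 2 ≤ a / (a + b) ↔ b ≤ a := by
  rw [div_le_div_iff₀ two_pos hab]
  constructor <;> intro h <;> linarith

lemma one_add_div_two_add_le_div_add_iff {a b : ℝ} (hab : 0 < a + b) :
    (1 + a) / (2 + a + b) ≤ a / (a + b) ↔ b ≤ a := by
  rw [div_le_div_iff₀ (by linarith) hab]
  constructor <;> intro h <;> linarith

theorem competition_threshold_le_general (u m : ℝ) (hu1 : u < 1)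
    (hm1 : m < 1) :
    ((1 + (1 - m)) / (2 + (1 - m) + (1 - u)) ≤ (1 - m) / ((1 - m) + (1 - u)) ↔
        (1 - m) / ((1 - m) + (1 - u)) ≥ 1 / 2) ∧
      ((1 - m) / ((1 - m) + (1 - u)) ≥ 1 / 2 ↔ u ≥ m) ∧
      (m ≤ u →
        max ((1 + (1 - m)) / (2 + (1 - m) + (1 - u))) (1 / 2) ≤
          max ((1 - m) / ((1 - m) + (1 - u))) (1 / 2)) := by
  have hpos : 0 < (1 - m) + (1 - u) := by linarith
  have competition_iff := one_add_div_two_add_le_div_add_iff hpos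
  have half_iff := half_le_div_add_iff hpos
  rw [sub_le_sub_iff_left] at competition_iff half_iff
  exact ⟨competition_iff.trans half_iff.symm, half_iff,
    fun hmu => max_le_max (competition_iff.mpr hmu) le_rfl⟩

/-- For `u, m ∈ [0,1)`, the competition acceptance threshold is below the no-competition
threshold exactly when the latter is at least `1/2`, i.e. when `u ≥ m`; in particular,
for `m ≤ u` the max-with-`1/2` competition threshold is at most the no-competition one. -/
theorem competition_threshold_le (u m : ℝ) (hu0 : 0 ≤ u) (hu1 : u < 1)
    (hm0 : 0 ≤ m) (hm1 : m < 1) :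
    ((1 + (1 - m)) / (2 + (1 - m) + (1 - u)) ≤ (1 - m) / ((1 - m) + (1 - u)) ↔
        (1 - m) / ((1 - m) + (1 - u)) ≥ 1 / 2) ∧
      ((1 - m) / ((1 - m) + (1 - u)) ≥ 1 / 2 ↔ u ≥ m) ∧
      (m ≤ u →
        max ((1 + (1 - m)) / (2 + (1 - m) + (1 - u))) (1 / 2) ≤
          max ((1 - m) / ((1 - m) + (1 - u))) (1 / 2)) :=
  competition_threshold_le_general u m hu1 hm1
end
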